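/- arXiv:math/0612425 — 7 statements merged into one kernel-verified Lean document; each statement's English description precedes it below -/
import Mathlib

section
/- Let g : [0,T] → [0,∞] satisfy the lower-bound property: for all 0 ≤ s ≤ t ≤ T, g(s) ≥ g(t)/√(1 + c(t−s)g(t)²) (with constant c > 0, and interpreting the right side as 1/√(c(t−s)) when g(t) = ∞). If g(t) → ∞ as t → T⁻, then g(s) ≥ 1/√(c(T−s)) for all 0 ≤ s < T. -/
open Filter ENNReal

lemma leray_aux_tendsto (a : ℝ) (ha : 0 < a) :
    Tendsto (fun X : ℝ => X / Real.sqrt (1 + a * X ^ 2)) atTop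
      (nhds ((Real.sqrt a)⁻¹)) := by
  have h0 : Tendsto (fun X : ℝ => (X⁻¹) ^ 2 + a) atTop (nhds ((0:ℝ) ^ 2 + a)) :=
    (tendsto_inv_atTop_zero.pow 2).add tendsto_const_nhds
  have h1 : Tendsto (fun X : ℝ => Real.sqrt ((X⁻¹) ^ 2 + a)) atTop (nhds (Real.sqrt a)) := by
    simpa [Function.comp_def] using (Real.continuous_sqrt.continuousAt (x := (0:ℝ) ^ 2 + a)).tendsto.comp h0
  have h2 : Tendsto (fun X : ℝ => (Real.sqrt ((X⁻¹) ^ 2 + a))⁻¹) atTop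
      (nhds ((Real.sqrt a)⁻¹)) :=
    h1.inv₀ (ne_of_gt (Real.sqrt_pos.2 ha))
  refine h2.congr' ?_
  filter_upwards [eventually_gt_atTop (0 : ℝ)] with X hX
  have hX0 : X ≠ 0 := ne_of_gt hX
  have key : Real.sqrt (1 + a * X ^ 2) = X * Real.sqrt ((X⁻¹) ^ 2 + a) := by
    rw [show (1 : ℝ) + a * X ^ 2 = X ^ 2 * ((X⁻¹) ^ 2 + a) by field_simp,
      Real.sqrt_mul (sq_nonneg X), Real.sqrt_sq hX.le]
  rw [eq_comm, key, div_mul_eq_div_div, div_self hX0, one_div]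

theorem leray_blowup_rate (T c : ℝ) (hT : 0 < T) (hc : 0 < c) (g : ℝ → ENNReal)
    (hlow : ∀ s t : ℝ, 0 ≤ s → s ≤ t → t ≤ T →
      (g t ≠ ⊤ → g s ≥ g t / (1 + ENNReal.ofReal (c * (t - s)) * (g t) ^ 2) ^ ((1:ℝ)/2)) ∧
      (g t = ⊤ → g s ≥ (ENNReal.ofReal (c * (t - s))) ^ (-(1:ℝ)/2)))
    (hblow : Tendsto g (nhdsWithin T (Set.Iio T)) (nhds ⊤)) :
    ∀ s : ℝ, 0 ≤ s → s < T → g s ≥ (ENNReal.ofReal (c * (T - s))) ^ (-(1:ℝ)/2) := by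
  intro s hs hsT
  set a : ℝ := c * (T - s) with ha_def
  have ha : 0 < a := mul_pos hc (by linarith)
  by_cases htop : ∃ t, s ≤ t ∧ t < T ∧ g t = ⊤
  · -- some blow-up point before T
    obtain ⟨t, hst, htT, hgt⟩ := htop
    have h := (hlow s t hs hst htT.le).2 hgt
    refine le_trans ?_ h
    -- antitone in the base
    have hbase : ENNReal.ofReal (c * (t - s)) ≤ ENNReal.ofReal a :=
      ENNReal.ofReal_le_ofReal (by nlinarith)
    rw [show (-(1:ℝ)/2) = -((1:ℝ)/2) by ring, ENNReal.rpow_neg, ENNReal.rpow_neg]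
    exact ENNReal.inv_le_inv.2 (ENNReal.rpow_le_rpow hbase (by norm_num))
  · push_neg at htop
    have hgs_fin : g s ≠ ⊤ := htop s le_rfl hsT
    set G : ℝ := (g s).toReal with hG_def
    -- Step 1: for every n : ℕ choose t with g t ≥ n
    have hex : ∀ n : ℕ, ∃ t, s < t ∧ t < T ∧ (n : ℝ≥0∞) ≤ g t := by
      intro n
      have h1 : ∀ᶠ t in nhdsWithin T (Set.Iio T), (n : ℝ≥0∞) < g t :=
        hblow.eventually (eventually_gt_nhds (by simp : (n : ℝ≥0∞) < ⊤))
      have h2 : ∀ᶠ t in nhdsWithin T (Set.Iio T), t ∈ Set.Ioo s T :=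
        Ioo_mem_nhdsLT_of_mem ⟨hsT, le_rfl⟩
      obtain ⟨t, hn, hmem⟩ := (h1.and h2).exists
      exact ⟨t, hmem.1, hmem.2, hn.le⟩
    choose t ht1 ht2 ht3 using hex
    set X : ℕ → ℝ := fun n => (g (t n)).toReal with hX_def
    have htfin : ∀ n, g (t n) ≠ ⊤ := fun n => htop (t n) (ht1 n).le (ht2 n)
    have hXn : ∀ n : ℕ, (n : ℝ) ≤ X n := by
      intro n
      have := ENNReal.toReal_mono (htfin n) (ht3 n)
      simpa using this
    -- Step 2: real inequality G ≥ X n / sqrt (1 + a * (X n)^2)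
    have hkey : ∀ n, X n / Real.sqrt (1 + a * (X n) ^ 2) ≤ G := by
      intro n
      have h := (hlow s (t n) hs (ht1 n).le (ht2 n).le).1 (htfin n)
      -- replace c*(t n - s) by a (bigger denominator ⇒ smaller quotient)
      have hbase : ENNReal.ofReal (c * (t n - s)) ≤ ENNReal.ofReal a :=
        ENNReal.ofReal_le_ofReal (by nlinarith [(ht2 n).le, (ht1 n).le])
      have hden : (1 + ENNReal.ofReal (c * (t n - s)) * (g (t n)) ^ 2) ^ ((1:ℝ)/2)
          ≤ (1 + ENNReal.ofReal a * (g (t n)) ^ 2) ^ ((1:ℝ)/2) :=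
        ENNReal.rpow_le_rpow (by gcongr) (by norm_num)
      have h2 : g (t n) / (1 + ENNReal.ofReal a * (g (t n)) ^ 2) ^ ((1:ℝ)/2) ≤ g s :=
        le_trans (ENNReal.div_le_div_left hden _) h
      -- convert to reals
      have hDfin : (1 + ENNReal.ofReal a * (g (t n)) ^ 2) ≠ ⊤ := by
        simp [ENNReal.add_ne_top, ENNReal.mul_ne_top, ENNReal.pow_ne_top (htfin n)]
      have hfin : g (t n) / (1 + ENNReal.ofReal a * (g (t n)) ^ 2) ^ ((1:ℝ)/2) ≠ ⊤ := by
        have h1 : (1 : ℝ≥0∞) ≤ (1 + ENNReal.ofReal a * (g (t n)) ^ 2) ^ ((1:ℝ)/2) :=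
          ENNReal.one_le_rpow (le_add_right le_rfl) (by norm_num)
        exact (ENNReal.div_lt_top (htfin n) (by intro h0; rw [h0] at h1; simp at h1)).ne
      have := (ENNReal.toReal_le_toReal hfin hgs_fin).2 h2
      rw [ENNReal.toReal_div, ← ENNReal.toReal_rpow] at this
      have hDto : (1 + ENNReal.ofReal a * (g (t n)) ^ 2).toReal = 1 + a * (X n) ^ 2 := by
        rw [ENNReal.toReal_add (by simp) (ENNReal.mul_ne_top ENNReal.ofReal_ne_top
          (ENNReal.pow_ne_top (htfin n))), ENNReal.toReal_mul, ENNReal.toReal_ofReal ha.le,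
          ENNReal.toReal_pow]
        simp [hX_def]
      rw [hDto, ← Real.sqrt_eq_rpow] at this
      exact this
    -- Step 3: take the limit
    have hXtop : Tendsto X atTop atTop :=
      tendsto_atTop_mono hXn tendsto_natCast_atTop_atTop
    have hlim : Tendsto (fun n => X n / Real.sqrt (1 + a * (X n) ^ 2)) atTop
        (nhds ((Real.sqrt a)⁻¹)) := (leray_aux_tendsto a ha).comp hXtop
    have hG : (Real.sqrt a)⁻¹ ≤ G := le_of_tendsto hlim (Eventually.of_forall hkey)
    -- Step 4: conclude
    have : (ENNReal.ofReal a) ^ (-(1:ℝ)/2) = ENNReal.ofReal ((Real.sqrt a)⁻¹) := by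
      rw [ENNReal.ofReal_rpow_of_pos ha, Real.rpow_def_of_pos ha]
      congr 1
      rw [← Real.exp_log (Real.sqrt_pos.2 ha), ← Real.exp_neg, Real.log_sqrt ha.le]
      ring_nf
    rw [this]
    exact ENNReal.ofReal_le_of_le_toReal hG
end

section
/- Suppose g : (0,T] → (0,∞) satisfies g(s)² ≥ g(t)²/√(1 + c(t−s)g(t)⁴) for all 0 < s ≤ t ≤ T, where c > 0, and ∫₀ᵀ g(s)⁴ ds = M < ∞. Then for all t ∈ (0,T], c t g(t)⁴ ≤ e^{cM} − 1, so t^{1/2} g(t)² ≤ √((e^{cM}−1)/c). -/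
open MeasureTheory

theorem L4_decay_bound (T c M : ℝ) (hT : 0 < T) (hc : 0 < c) (g : ℝ → ℝ)
    (hpos : ∀ t ∈ Set.Ioc (0:ℝ) T, 0 < g t)
    (hlow : ∀ s t : ℝ, 0 < s → s ≤ t → t ≤ T →
      g s ^ 2 ≥ g t ^ 2 / Real.sqrt (1 + c * (t - s) * g t ^ 4))
    (hint : IntegrableOn (fun s => g s ^ 4) (Set.Ioc 0 T))
    (hM : (∫ s in Set.Ioc (0:ℝ) T, g s ^ 4) = M) :
    ∀ t ∈ Set.Ioc (0:ℝ) T,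
      c * t * g t ^ 4 ≤ Real.exp (c * M) - 1 ∧
      t ^ ((1:ℝ)/2) * g t ^ 2 ≤ Real.sqrt ((Real.exp (c * M) - 1) / c) := by
  intro t ht
  obtain ⟨ht0, htT⟩ := ht
  set a : ℝ := g t ^ 4 with ha
  have ha0 : 0 < a := pow_pos (hpos t ⟨ht0, htT⟩) 4
  -- lower bound function
  set f : ℝ → ℝ := fun s => a / (1 + c * (t - s) * a) with hf
  have hden : ∀ s : ℝ, s ≤ t → 0 < 1 + c * (t - s) * a := by
    intro s hs
    have hts : 0 ≤ t - s := sub_nonneg.mpr hs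
    have : 0 ≤ c * (t - s) * a := by positivity
    linarith
  -- pointwise lower bound
  have hptw : ∀ s ∈ Set.Ioc (0:ℝ) t, f s ≤ g s ^ 4 := by
    intro s hs
    obtain ⟨hs0, hst⟩ := hs
    have hd := hden s hst
    have h1 := hlow s t hs0 hst htT
    have hsq : Real.sqrt (1 + c * (t - s) * a) > 0 := Real.sqrt_pos.mpr hd
    have h2 : (g t ^ 2 / Real.sqrt (1 + c * (t - s) * a)) ^ 2 ≤ (g s ^ 2) ^ 2 := by
      apply pow_le_pow_left₀ (by positivity) h1
    have h3 : (g t ^ 2 / Real.sqrt (1 + c * (t - s) * a)) ^ 2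
        = a / (1 + c * (t - s) * a) := by
      rw [div_pow, Real.sq_sqrt hd.le, ha]
      ring_nf
    rw [hf]
    calc a / (1 + c * (t - s) * a) = _ := h3.symm
      _ ≤ (g s ^ 2) ^ 2 := h2
      _ = g s ^ 4 := by ring
  -- f is continuous on [0,t]
  have hfc : ContinuousOn f (Set.uIcc 0 t) := by
    apply ContinuousOn.div continuousOn_const
    · fun_prop
    · intro s hs
      rw [Set.uIcc_of_le ht0.le] at hs
      exact (hden s hs.2).ne'
  have hfint : IntervalIntegrable f volume 0 t := hfc.intervalIntegrable
  -- compute the integral of f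
  have hFderiv : ∀ s ∈ Set.uIcc (0:ℝ) t,
      HasDerivAt (fun s => -(1/c) * Real.log (1 + c * (t - s) * a)) (f s) s := by
    intro s hs
    rw [Set.uIcc_of_le ht0.le] at hs
    have hd := hden s hs.2
    have h1 : HasDerivAt (fun s : ℝ => 1 + c * (t - s) * a) (c * (-1) * a) s := by
      have : HasDerivAt (fun s : ℝ => t - s) (-1) s := by
        simpa using (hasDerivAt_id s).const_sub t
      simpa using ((this.const_mul c).mul_const a).const_add 1
    have h2 := (h1.log hd.ne').const_mul (-(1/c))
    refine h2.congr_deriv ?_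
    rw [hf]
    field_simp
  have hInt : ∫ s in Set.Ioc (0:ℝ) t, f s = (1/c) * Real.log (1 + c * t * a) := by
    rw [← intervalIntegral.integral_of_le ht0.le]
    rw [intervalIntegral.integral_eq_sub_of_hasDerivAt hFderiv hfint]
    simp
  -- comparison
  have hnonneg : ∀ s : ℝ, 0 ≤ g s ^ 4 := fun s => by positivity
  have hint_t : IntegrableOn (fun s => g s ^ 4) (Set.Ioc 0 t) :=
    hint.mono_set (Set.Ioc_subset_Ioc le_rfl htT)
  have hfint' : IntegrableOn f (Set.Ioc 0 t) :=
    (intervalIntegrable_iff_integrableOn_Ioc_of_le ht0.le).mp hfint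
  have hcmp1 : ∫ s in Set.Ioc (0:ℝ) t, f s ≤ ∫ s in Set.Ioc (0:ℝ) t, g s ^ 4 := by
    apply setIntegral_mono_on hfint' hint_t measurableSet_Ioc hptw
  have hcmp2 : ∫ s in Set.Ioc (0:ℝ) t, g s ^ 4 ≤ ∫ s in Set.Ioc (0:ℝ) T, g s ^ 4 := by
    apply setIntegral_mono_set hint
    · exact Filter.Eventually.of_forall fun s => hnonneg s
    · exact Filter.Eventually.of_forall (Set.Ioc_subset_Ioc le_rfl htT)
  have hlog : Real.log (1 + c * t * a) ≤ c * M := by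
    have : (1/c) * Real.log (1 + c * t * a) ≤ M := by
      rw [← hM]; rw [← hInt] at *; linarith
    calc Real.log (1 + c * t * a) = c * ((1/c) * Real.log (1 + c * t * a)) := by
          field_simp
      _ ≤ c * M := by exact mul_le_mul_of_nonneg_left this hc.le
  have hpos' : 0 < 1 + c * t * a := by positivity
  have hexp : 1 + c * t * a ≤ Real.exp (c * M) := by
    have := Real.exp_log hpos' ▸ Real.exp_le_exp.mpr hlog
    linarith [Real.exp_log hpos', Real.exp_le_exp.mpr hlog]
  have hmain : c * t * a ≤ Real.exp (c * M) - 1 := by linarith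
  refine ⟨hmain, ?_⟩
  have hta : t * a ≤ (Real.exp (c * M) - 1) / c := by
    rw [le_div_iff₀ hc]; linarith [hmain]
  have h1 : t ^ ((1:ℝ)/2) = Real.sqrt t := (Real.sqrt_eq_rpow t).symm
  have h2 : g t ^ 2 = Real.sqrt a := by
    rw [ha, show g t ^ 4 = (g t ^ 2) ^ 2 by ring, Real.sqrt_sq (by positivity)]
  rw [h1, h2, ← Real.sqrt_mul ht0.le]
  exact Real.sqrt_le_sqrt hta
end

section
/- Let g : (0,1] → [0,∞] with ∫₀¹ g(s)² ds < ∞ satisfy g(s)² ≥ 1/√(g(t)^{-4} + c(t−s)) for all 0 < s ≤ t ≤ 1 and some c > 0. If (tₙ) is a sequence in (0,1] with g(tₙ)² ≥ n for every n ≥ 1, then the upper box-counting dimension of the set {tₙ : n ≥ 1} is at most 1/2. -/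
/-!
If `g (t)² ≥ n ≥ ε^{-1/2}`, the backward bound gives `g (s)² ≥ ((1 + c) ε)^{-1/2}` for all
`s ∈ (t - ε, t]`, so that interval carries at least `√ε / √(1 + c)` of `∫ g²`. Cut `(0, 1]` into
cells of width `ε`: every cell containing such a late point `tₙ` takes that much of the finite
integral from itself and its left neighbour, so only `O(ε^{-1/2})` cells are occupied. Together
with the `ε^{-1/2}` early points this gives `N(X, ε) = O(ε^{-1/2})`.
-/

open MeasureTheory

noncomputable def coverN (X : Set ℝ) (ε : ℝ) : ℕ :=
  sInf {n : ℕ | ∃ F : Finset ℝ, F.card = n ∧ X ⊆ ⋃ x ∈ F, Metric.ball x ε}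

noncomputable def ubDim (X : Set ℝ) : ℝ :=
  Filter.limsup (fun ε : ℝ => Real.log (coverN X ε) / (-Real.log ε))
    (nhdsWithin 0 (Set.Ioi 0))

open Set Filter Topology Function
open scoped ENNReal

def cell (ε : ℝ) (k : ℤ) : Set ℝ := Ico (k * ε) ((k + 1) * ε)

lemma mem_cell_floor_div {ε : ℝ} (hε : 0 < ε) (x : ℝ) : x ∈ cell ε ⌊x / ε⌋ :=
  ⟨(le_div_iff₀ hε).1 (Int.floor_le _), (div_lt_iff₀ hε).1 (Int.lt_floor_add_one _)⟩

lemma cell_subset_ball (ε : ℝ) (k : ℤ) : cell ε k ⊆ Metric.ball ((k + 1 / 2) * ε) ε := by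
  rintro x ⟨h₁, h₂⟩
  rw [Metric.mem_ball, Real.dist_eq, abs_lt]
  constructor <;> linarith

lemma pairwise_disjoint_cell (ε : ℝ) : Pairwise (Disjoint on cell ε) := by
  have h := pairwise_disjoint_Ico_zsmul ε
  simp only [zsmul_eq_mul, Int.cast_add, Int.cast_one] at h
  exact h

lemma Ioc_sub_subset_cell_union {ε y : ℝ} {k : ℤ} (hy : y ∈ cell ε k) :
    Ioc (y - ε) y ⊆ cell ε (k - 1) ∪ cell ε k := by
  rintro s ⟨hs₁, hs₂⟩
  obtain ⟨hy₁, hy₂⟩ := hy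
  rcases lt_or_ge s (k * ε) with h | h
  · exact Or.inl ⟨by push_cast; linarith, by push_cast; linarith⟩
  · exact Or.inr ⟨h, by linarith⟩

lemma sum_measure_cell_union_le (μ : Measure ℝ) (ε : ℝ) (K : Finset ℤ) :
    ∑ k ∈ K, μ (cell ε (k - 1) ∪ cell ε k) ≤ 2 * μ univ := by
  have hsum : ∀ f : ℤ → ℤ, Injective f → ∑ k ∈ K, μ (cell ε (f k)) ≤ μ univ :=
    fun f hf => sum_measure_le_measure_univ (fun _ _ => measurableSet_Ico.nullMeasurableSet)
      fun _ _ _ _ hij => ((pairwise_disjoint_cell ε).comp_of_injective hf hij).aedisjoint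
  calc ∑ k ∈ K, μ (cell ε (k - 1) ∪ cell ε k)
      ≤ ∑ k ∈ K, μ (cell ε (k - 1)) + ∑ k ∈ K, μ (cell ε k) := by
        rw [← Finset.sum_add_distrib]
        exact Finset.sum_le_sum fun k _ => measure_union_le _ _
    _ ≤ μ univ + μ univ := add_le_add (hsum _ (sub_left_injective)) (hsum id injective_id)
    _ = 2 * μ univ := (two_mul _).symm

open Classical in
/-- Cell `0` is left out: the mass estimate for a cell needs the length-`ε` interval to its left. -/
noncomputable def occupiedCells (ε : ℝ) (Y : Set ℝ) : Finset ℤ :=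
  (Finset.Icc 1 ⌊ε⁻¹⌋).filter fun k => (Y ∩ cell ε k).Nonempty

lemma card_occupiedCells_mul_le (μ : Measure ℝ) {ε : ℝ} {Y : Set ℝ} {δ : ℝ≥0∞}
    (hδ : ∀ y ∈ Y, ε ≤ y → δ ≤ μ (Ioc (y - ε) y)) :
    (occupiedCells ε Y).card * δ ≤ 2 * μ univ := by
  classical
  calc (occupiedCells ε Y).card * δ = ∑ _k ∈ occupiedCells ε Y, δ := by simp
    _ ≤ ∑ k ∈ occupiedCells ε Y, μ (cell ε (k - 1) ∪ cell ε k) := Finset.sum_le_sum fun k hk => ?_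
    _ ≤ 2 * μ univ := sum_measure_cell_union_le μ ε _
  obtain ⟨hkI, y, hy, hyk⟩ := Finset.mem_filter.1 hk
  have hk : (1 : ℝ) ≤ k := by exact_mod_cast (Finset.mem_Icc.1 hkI).1
  have hεy : ε ≤ y := by nlinarith [hyk.1, hyk.2]
  exact (hδ y hy hεy).trans (measure_mono (Ioc_sub_subset_cell_union hyk))

lemma coverN_le_card {X : Set ℝ} {ε : ℝ} (F : Finset ℝ) (h : X ⊆ ⋃ x ∈ F, Metric.ball x ε) :
    coverN X ε ≤ F.card :=
  Nat.sInf_le ⟨F, rfl, h⟩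

lemma subset_biUnion_ball_occupiedCells {ε : ℝ} (hε : 0 < ε) {Y : Set ℝ} (hY : Y ⊆ Ioc 0 1) :
    Y ⊆ ⋃ k ∈ insert 0 (occupiedCells ε Y), Metric.ball ((k + 1 / 2) * ε) ε := by
  classical
  intro y hy
  have hyk := mem_cell_floor_div hε y
  refine mem_iUnion₂.2 ⟨⌊y / ε⌋, ?_, cell_subset_ball ε _ hyk⟩
  rcases (Int.floor_nonneg.2 (div_nonneg (hY hy).1.le hε.le)).eq_or_lt with h0 | hpos
  · simp [← h0]
  · have hle : y / ε ≤ ε⁻¹ := by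
      rw [div_eq_mul_inv]
      exact mul_le_of_le_one_left (inv_nonneg.2 hε.le) (hY hy).2
    exact Finset.mem_insert_of_mem <| Finset.mem_filter.2
      ⟨Finset.mem_Icc.2 ⟨hpos, Int.floor_le_floor hle⟩, y, hy, hyk⟩

lemma coverN_le_card_add_card_occupiedCells {ε : ℝ} (hε : 0 < ε) {X Y : Set ℝ} (S : Finset ℝ)
    (hY : Y ⊆ Ioc 0 1) (hX : X ⊆ S ∪ Y) :
    coverN X ε ≤ S.card + (occupiedCells ε Y).card + 1 := by
  classical
  let F := S ∪ (insert 0 (occupiedCells ε Y)).image fun k : ℤ => (k + 1 / 2) * ε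
  refine (coverN_le_card F ?_).trans ?_
  · intro x hx
    rcases hX hx with hS | hYx
    · exact mem_iUnion₂.2 ⟨x, Finset.mem_union_left _ hS, Metric.mem_ball_self hε⟩
    · obtain ⟨k, hk, hxk⟩ := mem_iUnion₂.1 (subset_biUnion_ball_occupiedCells hε hY hYx)
      exact mem_iUnion₂.2 ⟨_, Finset.mem_union_right _ (Finset.mem_image_of_mem _ hk), hxk⟩
  · calc F.card ≤ S.card + ((insert 0 (occupiedCells ε Y)).image _).card := Finset.card_union_le _ _
      _ ≤ S.card + ((occupiedCells ε Y).card + 1) :=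
        Nat.add_le_add_left (Finset.card_image_le.trans (Finset.card_insert_le _ _)) _
      _ = _ := (add_assoc _ _ _).symm

def BackwardBound (c : ℝ) (g : ℝ → ℝ≥0∞) : Prop :=
  ∀ s t : ℝ, 0 < s → s ≤ t → t ≤ 1 →
    (g s) ^ 2 ≥ (((g t)⁻¹) ^ 4 + ENNReal.ofReal (c * (t - s))) ^ (-(1:ℝ)/2)

lemma inv_pow_four_le_of_le_sq {x : ℝ≥0∞} {r : ℝ} (hr : 0 < r) (h : ENNReal.ofReal r⁻¹ ≤ x ^ 2) :
    x⁻¹ ^ 4 ≤ ENNReal.ofReal (r ^ 2) := by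
  have h' : (x ^ 2)⁻¹ ≤ ENNReal.ofReal r := by
    simpa [ENNReal.ofReal_inv_of_pos hr] using ENNReal.inv_le_inv.2 h
  calc x⁻¹ ^ 4 = ((x ^ 2)⁻¹) ^ 2 := by rw [← ENNReal.inv_pow, ← ENNReal.inv_pow, ← pow_mul]
    _ ≤ ENNReal.ofReal r ^ 2 := pow_le_pow_left' h' 2
    _ = ENNReal.ofReal (r ^ 2) := (ENNReal.ofReal_pow hr.le 2).symm

section BackwardBound

variable {c : ℝ} {g : ℝ → ℝ≥0∞}

lemma BackwardBound.le_sq (hlow : BackwardBound c g) (hc : 0 ≤ c) {ε s t : ℝ} (hε : 0 < ε)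
    (hs : 0 < s) (hst : s ≤ t) (ht : t ≤ 1) (hts : t - s ≤ ε)
    (hgt : ENNReal.ofReal (√ε)⁻¹ ≤ g t ^ 2) :
    ENNReal.ofReal (√((1 + c) * ε))⁻¹ ≤ g s ^ 2 := by
  have h4 := inv_pow_four_le_of_le_sq (Real.sqrt_pos.2 hε) hgt
  rw [Real.sq_sqrt hε.le] at h4
  have hbase : (g t)⁻¹ ^ 4 + ENNReal.ofReal (c * (t - s)) ≤ ENNReal.ofReal ((1 + c) * ε) := by
    rw [add_mul, one_mul, ENNReal.ofReal_add hε.le (by positivity)]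
    exact add_le_add h4 (ENNReal.ofReal_le_ofReal (mul_le_mul_of_nonneg_left hts hc))
  calc ENNReal.ofReal (√((1 + c) * ε))⁻¹ = ENNReal.ofReal ((1 + c) * ε) ^ (-(1:ℝ)/2) := by
        rw [ENNReal.ofReal_rpow_of_pos (by positivity), Real.sqrt_eq_rpow,
          ← Real.rpow_neg (by positivity), neg_div]
    _ ≤ ((g t)⁻¹ ^ 4 + ENNReal.ofReal (c * (t - s))) ^ (-(1:ℝ)/2) := by
        rw [neg_div, ENNReal.rpow_neg, ENNReal.rpow_neg]
        exact ENNReal.inv_le_inv.2 (ENNReal.rpow_le_rpow hbase (by norm_num))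
    _ ≤ g s ^ 2 := hlow s t hs hst ht

lemma BackwardBound.ofReal_le_withDensity_Ioc (hlow : BackwardBound c g) (hc : 0 ≤ c)
    {ε t : ℝ} (hε : 0 < ε) (hεt : ε ≤ t) (ht : t ≤ 1) (hgt : ENNReal.ofReal (√ε)⁻¹ ≤ g t ^ 2) :
    ENNReal.ofReal (√ε / √(1 + c)) ≤
      (volume.withDensity fun s => g s ^ 2).restrict (Ioc 0 1) (Ioc (t - ε) t) := by
  have hsub : Ioc (t - ε) t ⊆ Ioc 0 1 := Ioc_subset_Ioc (by linarith) ht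
  rw [Measure.restrict_apply measurableSet_Ioc, inter_eq_left.2 hsub,
    withDensity_apply _ measurableSet_Ioc]
  calc ENNReal.ofReal (√ε / √(1 + c))
      = ∫⁻ _ in Ioc (t - ε) t, ENNReal.ofReal (√((1 + c) * ε))⁻¹ := by
        rw [setLIntegral_const, Real.volume_Ioc, sub_sub_cancel,
          ← ENNReal.ofReal_mul (by positivity)]
        congr 1
        rw [Real.sqrt_mul (by linarith)]
        field_simp
        rw [Real.sq_sqrt hε.le]
    _ ≤ ∫⁻ s in Ioc (t - ε) t, g s ^ 2 :=
        setLIntegral_mono' measurableSet_Ioc fun s hs =>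
          hlow.le_sq hc hε (by linarith [hs.1]) hs.2 ht (by linarith [hs.1]) hgt

end BackwardBound

lemma ubDim_le_of_coverN_le {X : Set ℝ} {C d : ℝ} (hC : 1 ≤ C) (hd : 0 ≤ d)
    (h : ∀ᶠ ε in 𝓝[>] 0, (coverN X ε : ℝ) ≤ C * ε ^ (-d)) : ubDim X ≤ d := by
  have hsmall : ∀ᶠ ε in 𝓝[>] (0 : ℝ), ε ∈ Ioo 0 1 := Ioo_mem_nhdsGT one_pos
  have hlim : Tendsto (fun ε => Real.log C / -Real.log ε + d) (𝓝[>] 0) (𝓝 d) := by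
    have hlog : Tendsto (fun ε => -Real.log ε) (𝓝[>] 0) atTop :=
      tendsto_neg_atBot_atTop.comp Real.tendsto_log_nhdsGT_zero
    simpa using (tendsto_const_nhds.div_atTop hlog).add (tendsto_const_nhds (x := d))
  refine (limsup_le_limsup ?_ ?_ hlim.isBoundedUnder_le).trans hlim.limsup_eq.le
  · filter_upwards [h, hsmall] with ε hε ⟨hε0, hε1⟩
    have hlog : 0 < -Real.log ε := neg_pos.2 (Real.log_neg hε0 hε1)
    have hbound : Real.log (coverN X ε) ≤ Real.log C + d * -Real.log ε := by
      rcases (Nat.zero_le (coverN X ε)).eq_or_lt with h0 | hpos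
      · rw [← h0, Nat.cast_zero, Real.log_zero]
        exact add_nonneg (Real.log_nonneg hC) (mul_nonneg hd hlog.le)
      · calc Real.log (coverN X ε) ≤ Real.log (C * ε ^ (-d)) :=
            Real.log_le_log (by exact_mod_cast hpos) hε
          _ = Real.log C + d * -Real.log ε := by
            rw [Real.log_mul (by positivity) (by positivity), Real.log_rpow hε0]
            ring
    rw [div_add' _ _ _ hlog.ne', div_le_div_iff_of_pos_right hlog]
    linarith
  · refine isCoboundedUnder_le_of_eventually_le _ (x := 0) ?_
    filter_upwards [hsmall] with ε ⟨hε0, hε1⟩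
    exact div_nonneg (Real.log_natCast_nonneg _) (neg_nonneg.2 (Real.log_nonpos hε0.le hε1.le))

lemma BackwardBound.card_occupiedCells_mul_sqrt_le {c : ℝ} {g : ℝ → ℝ≥0∞}
    (hlow : BackwardBound c g) (hc : 0 ≤ c) (hint : ∫⁻ s in Ioc 0 1, g s ^ 2 < ⊤) {t : ℕ → ℝ}
    (ht : ∀ n : ℕ, 1 ≤ n → t n ∈ Ioc 0 1) (hbig : ∀ n : ℕ, 1 ≤ n → (n : ℝ≥0∞) ≤ g (t n) ^ 2)
    {ε : ℝ} (hε : 0 < ε) {N : ℕ} (hN1 : 1 ≤ N) (hN : (√ε)⁻¹ ≤ N) :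
    ((occupiedCells ε (t '' Ici N)).card : ℝ) * √ε ≤
      2 * (∫⁻ s in Ioc 0 1, g s ^ 2).toReal * √(1 + c) := by
  set ν := (volume.withDensity fun s => g s ^ 2).restrict (Ioc 0 1)
  have hmass : ∀ y ∈ t '' Ici N, ε ≤ y → ENNReal.ofReal (√ε / √(1 + c)) ≤ ν (Ioc (y - ε) y) := by
    rintro _ ⟨n, hn, rfl⟩ hεy
    have hn1 := hN1.trans hn
    refine hlow.ofReal_le_withDensity_Ioc hc hε hεy (ht n hn1).2 ?_
    exact (ENNReal.ofReal_le_natCast.2 (hN.trans (by exact_mod_cast hn))).trans (hbig n hn1)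
  have hνI : ν univ = ∫⁻ s in Ioc 0 1, g s ^ 2 := by
    rw [Measure.restrict_apply_univ, withDensity_apply _ measurableSet_Ioc]
  have h := ENNReal.toReal_mono (ENNReal.mul_ne_top ENNReal.ofNat_ne_top hint.ne)
    (hνI ▸ card_occupiedCells_mul_le ν hmass)
  rwa [ENNReal.toReal_mul, ENNReal.toReal_mul, ENNReal.toReal_ofReal (by positivity),
    mul_div_assoc', div_le_iff₀ (by positivity)] at h

lemma BackwardBound.coverN_le {c : ℝ} {g : ℝ → ℝ≥0∞} (hlow : BackwardBound c g) (hc : 0 ≤ c)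
    (hint : ∫⁻ s in Ioc 0 1, g s ^ 2 < ⊤) {t : ℕ → ℝ} (ht : ∀ n : ℕ, 1 ≤ n → t n ∈ Ioc 0 1)
    (hbig : ∀ n : ℕ, 1 ≤ n → (n : ℝ≥0∞) ≤ g (t n) ^ 2) {ε : ℝ} (hε0 : 0 < ε) (hε1 : ε < 1) :
    (coverN {x | ∃ n, 1 ≤ n ∧ x = t n} ε : ℝ) ≤
      2 * ((∫⁻ s in Ioc 0 1, g s ^ 2).toReal * √(1 + c) + 1) * ε ^ (-(1 / 2 : ℝ)) := by
  set r := √ε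
  have hr : 0 < r := Real.sqrt_pos.2 hε0
  set N := ⌈r⁻¹⌉₊
  have hN : 1 ≤ N := Nat.one_le_iff_ne_zero.2 (Nat.ceil_pos.2 (inv_pos.2 hr)).ne'
  have hY : t '' Ici N ⊆ Ioc 0 1 := image_subset_iff.2 fun n hn => ht n (hN.trans hn)
  have hX : {x | ∃ n, 1 ≤ n ∧ x = t n} ⊆ ↑((Finset.Ico 1 N).image t) ∪ t '' Ici N := by
    rintro _ ⟨n, hn, rfl⟩
    rcases lt_or_ge n N with h | h
    · exact Or.inl (Finset.mem_coe.2 (Finset.mem_image_of_mem t (Finset.mem_Ico.2 ⟨hn, h⟩)))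
    · exact Or.inr (mem_image_of_mem t h)
  have hcov : coverN {x | ∃ n, 1 ≤ n ∧ x = t n} ε ≤ N + (occupiedCells ε (t '' Ici N)).card := by
    have := coverN_le_card_add_card_occupiedCells hε0 _ hY hX
    have := (Finset.card_image_le (s := Finset.Ico 1 N) (f := t)).trans_eq (Nat.card_Ico 1 N)
    omega
  have hcells := hlow.card_occupiedCells_mul_sqrt_le hc hint ht hbig hε0 hN (Nat.le_ceil _)
  have hNr : (N : ℝ) * r ≤ 1 + r := by
    nlinarith [Nat.ceil_lt_add_one (inv_pos.2 hr).le, mul_inv_cancel₀ hr.ne']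
  have hr1 : r ≤ 1 := Real.sqrt_le_one.2 hε1.le
  rw [Real.rpow_neg hε0.le, ← Real.sqrt_eq_rpow, ← div_eq_mul_inv, le_div_iff₀ hr]
  calc (coverN {x | ∃ n, 1 ≤ n ∧ x = t n} ε : ℝ) * r
      ≤ N * r + (occupiedCells ε (t '' Ici N)).card * r := by
        rw [← add_mul]; gcongr; exact_mod_cast hcov
    _ ≤ 2 * ((∫⁻ s in Ioc 0 1, g s ^ 2).toReal * √(1 + c) + 1) := by linarith

theorem blowup_times_dim_le_half (c : ℝ) (hc : 0 < c) (g : ℝ → ENNReal)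
    (hint : (∫⁻ s in Set.Ioc (0:ℝ) 1, (g s) ^ 2) < ⊤)
    (hlow : ∀ s t : ℝ, 0 < s → s ≤ t → t ≤ 1 →
      (g s) ^ 2 ≥ (((g t)⁻¹) ^ 4 + ENNReal.ofReal (c * (t - s))) ^ (-(1:ℝ)/2))
    (t : ℕ → ℝ) (ht : ∀ n : ℕ, 1 ≤ n → t n ∈ Set.Ioc (0:ℝ) 1)
    (hbig : ∀ n : ℕ, 1 ≤ n → (g (t n)) ^ 2 ≥ (n : ENNReal)) :
    ubDim {x : ℝ | ∃ n : ℕ, 1 ≤ n ∧ x = t n} ≤ 1 / 2 := by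
  have hC : 0 ≤ (∫⁻ s in Ioc 0 1, g s ^ 2).toReal * √(1 + c) := by positivity
  exact ubDim_le_of_coverN_le (by linarith) (by norm_num) <|
    eventually_of_mem (Ioo_mem_nhdsGT one_pos) fun ε hε =>
      BackwardBound.coverN_le hlow hc.le hint ht hbig hε.1 hε.2
end

section
/- Let g : (0,1] → [0,∞] with ∫₀¹ g(s)² ds < ∞, and suppose g(s)² ≥ 1/√(c(t−s)) for all 0 < s < t ≤ 1 whenever g(t) = ∞, with c > 0. Let Σ = {t ∈ (0,1] : g(t) = ∞}. Then the upper box-counting dimension of Σ is at most 1/2. -/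
open MeasureTheory

-- interval decomposition
lemma interval_mem (ε : ℝ) (hε : 0 < ε) (t : ℝ) (ht : t ∈ Set.Ioc (0:ℝ) 1) :
    ∃ k < ⌈1/ε⌉₊, t ∈ Set.Ioc (ε*k) (ε*(k+1)) := by
  obtain ⟨ht0, ht1⟩ := ht
  have hn1 : 1 ≤ ⌈t/ε⌉₊ := Nat.one_le_iff_ne_zero.mpr (by
    simpa [Nat.ceil_eq_zero, not_le] using (div_pos ht0 hε))
  obtain ⟨k, hk⟩ : ∃ k, ⌈t/ε⌉₊ = k + 1 := ⟨⌈t/ε⌉₊ - 1, (Nat.succ_pred_eq_of_pos hn1).symm⟩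
  refine ⟨k, ?_, ?_, ?_⟩
  · have : ⌈t/ε⌉₊ ≤ ⌈1/ε⌉₊ := Nat.ceil_le_ceil (by gcongr)
    omega
  · have : (k:ℝ) < t/ε := by
      rw [← Nat.lt_ceil]; omega
    calc ε * k = (k:ℝ) * ε := by ring
    _ < t := by rwa [← lt_div_iff₀ hε]
  · have : t/ε ≤ (⌈t/ε⌉₊ : ℝ) := Nat.le_ceil _
    rw [hk] at this
    push_cast at this
    calc t = (t/ε) * ε := by field_simp
    _ ≤ ((k:ℝ)+1) * ε := by nlinarith
    _ = ε * ((k:ℝ)+1) := by ring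

lemma key_count (c : ℝ) (hc : 0 < c) (g : ℝ → ENNReal)
    (hint : (∫⁻ s in Set.Ioc (0:ℝ) 1, (g s) ^ 2) < ⊤)
    (hlow : ∀ s t : ℝ, 0 < s → s < t → t ≤ 1 → g t = ⊤ →
      (g s) ^ 2 ≥ (ENNReal.ofReal (c * (t - s))) ^ (-(1:ℝ)/2))
    (ε : ℝ) (hε : 0 < ε) (hε1 : ε ≤ 1) :
    (coverN {t ∈ Set.Ioc (0:ℝ) 1 | g t = ⊤} ε : ℝ)
      ≤ (2 * Real.sqrt (2*c) * (∫⁻ s in Set.Ioc (0:ℝ) 1, (g s) ^ 2).toReal + 1)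
          / Real.sqrt ε := by
  classical
  set S := {t ∈ Set.Ioc (0:ℝ) 1 | g t = ⊤} with hS
  set I := ∫⁻ s in Set.Ioc (0:ℝ) 1, (g s) ^ 2 with hI
  set M := ⌈1/ε⌉₊ with hM
  set Jmem : ℕ → Prop := fun k => (S ∩ Set.Ioc (ε*k) (ε*(k+1))).Nonempty with hJ
  set K : Finset ℕ := (Finset.range M).filter Jmem with hK
  set τ : ℕ → ℝ := fun k => if h : Jmem k then h.choose else 0 with hτ
  -- covering bound
  have hcov : coverN S ε ≤ K.card := by
    have hmem : (K.image τ).card ∈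
        {n : ℕ | ∃ F : Finset ℝ, F.card = n ∧ S ⊆ ⋃ x ∈ F, Metric.ball x ε} := by
      refine ⟨K.image τ, rfl, ?_⟩
      intro t htS
      obtain ⟨k, hkM, hkJ⟩ := interval_mem ε hε t htS.1
      have hk : Jmem k := ⟨t, htS, hkJ⟩
      have hτk : τ k ∈ S ∩ Set.Ioc (ε*k) (ε*(k+1)) := by
        rw [hτ]; simp only [dif_pos hk]; exact hk.choose_spec
      refine Set.mem_biUnion (Finset.mem_image_of_mem τ
        (Finset.mem_filter.mpr ⟨Finset.mem_range.mpr hkM, hk⟩)) ?_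
      have h1 := hτk.2.1
      have h2 := hτk.2.2
      have h3 := hkJ.1
      have h4 := hkJ.2
      simp only [Metric.mem_ball, Real.dist_eq]
      rw [abs_lt]
      constructor <;> nlinarith
    calc coverN S ε ≤ (K.image τ).card := Nat.sInf_le hmem
      _ ≤ K.card := Finset.card_image_le
  -- counting bound
  set K' : Finset ℕ := K.erase 0 with hK'
  set C : ENNReal := ENNReal.ofReal ((2*c*ε) ^ (-(1:ℝ)/2)) with hC
  set A : ℕ → Set ℝ := fun k => Set.Ioo (ε*k - ε) (ε*k - ε/2) with hA
  have hdisj : ∀ j k : ℕ, j ≠ k → ∀ s, s ∈ A j → s ∈ A k → False := by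
    have base : ∀ j k : ℕ, j < k → ∀ s, s ∈ A j → s ∈ A k → False := by
      intro j k hjk s hsj hsk
      have hj1 : (j:ℝ) + 1 ≤ k := by exact_mod_cast hjk
      obtain ⟨hsj1, hsj2⟩ := hsj
      obtain ⟨hsk1, hsk2⟩ := hsk
      nlinarith
    intro j k hjk s hsj hsk
    rcases lt_or_gt_of_ne hjk with h | h
    · exact base j k h s hsj hsk
    · exact base k j h s hsk hsj
  have hmain : ∀ k ∈ K', A k ⊆ Set.Ioc (0:ℝ) 1 ∧ ∀ s ∈ A k, C ≤ (g s) ^ 2 := by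
    intro k hk
    have hk0 : k ≠ 0 := Finset.ne_of_mem_erase hk
    have hk1 : (1:ℝ) ≤ (k:ℝ) := by exact_mod_cast Nat.one_le_iff_ne_zero.mpr hk0
    have hkK : k ∈ K := Finset.mem_of_mem_erase hk
    obtain ⟨t, htS, htJ⟩ : Jmem k := (Finset.mem_filter.mp hkK).2
    have ht1 : t ≤ 1 := htS.1.2
    have htop : g t = ⊤ := htS.2
    have htJ1 := htJ.1
    have htJ2 := htJ.2
    constructor
    · rintro s ⟨hs1, hs2⟩
      constructor
      · nlinarith
      · nlinarith
    · rintro s ⟨hs1, hs2⟩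
      have hs0 : 0 < s := by nlinarith
      have hst : s < t := by nlinarith
      have h1 := hlow s t hs0 hst ht1 htop
      have hpos : 0 < c * (t - s) := by nlinarith
      have h2 : (ENNReal.ofReal (c * (t - s))) ^ (-(1:ℝ)/2)
          = ENNReal.ofReal ((c * (t - s)) ^ (-(1:ℝ)/2)) :=
        ENNReal.ofReal_rpow_of_pos hpos
      have h3 : (2*c*ε) ^ (-(1:ℝ)/2) ≤ (c * (t - s)) ^ (-(1:ℝ)/2) := by
        apply Real.rpow_le_rpow_of_nonpos hpos
        · nlinarith
        · norm_num
      calc C ≤ ENNReal.ofReal ((c * (t - s)) ^ (-(1:ℝ)/2)) := ENNReal.ofReal_le_ofReal h3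
        _ = (ENNReal.ofReal (c * (t - s))) ^ (-(1:ℝ)/2) := h2.symm
        _ ≤ (g s) ^ 2 := h1
  have hsum : (K'.card : ENNReal) * (C * ENNReal.ofReal (ε/2)) ≤ I := by
    have h1 : (∫⁻ s in Set.Ioc (0:ℝ) 1, ∑ k ∈ K', (A k).indicator (fun _ => C) s) ≤ I := by
      rw [hI]
      apply setLIntegral_mono' measurableSet_Ioc
      intro s _
      by_cases hex : ∃ k ∈ K', s ∈ A k
      · obtain ⟨k, hk, hsk⟩ := hex
        have heq : ∑ j ∈ K', (A j).indicator (fun _ => C) s = C := by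
          rw [Finset.sum_eq_single_of_mem k hk]
          · simp [Set.indicator_of_mem hsk]
          · intro j hj hjk
            exact Set.indicator_of_notMem (fun h => hdisj j k hjk s h hsk) _
        rw [heq]
        exact (hmain k hk).2 s hsk
      · push_neg at hex
        have heq : ∑ j ∈ K', (A j).indicator (fun _ => C) s = 0 :=
          Finset.sum_eq_zero fun j hj => Set.indicator_of_notMem (hex j hj) _
        rw [heq]; exact zero_le
    have h2 : (∫⁻ s in Set.Ioc (0:ℝ) 1, ∑ k ∈ K', (A k).indicator (fun _ => C) s)
        = ∑ k ∈ K', C * ENNReal.ofReal (ε/2) := by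
      rw [lintegral_finset_sum _ (fun k _ => measurable_const.indicator measurableSet_Ioo)]
      refine Finset.sum_congr rfl fun k hk => ?_
      rw [lintegral_indicator_const measurableSet_Ioo,
        Measure.restrict_apply measurableSet_Ioo,
        Set.inter_eq_self_of_subset_left (hmain k hk).1]
      congr 1
      rw [hA]
      simp only [Real.volume_Ioo]
      congr 1
      ring
    rw [Finset.sum_const, nsmul_eq_mul] at h2
    rw [h2] at h1
    exact h1
  -- convert to reals
  have hC0 : C ≠ 0 := by
    rw [hC]
    simp only [ne_eq, ENNReal.ofReal_eq_zero, not_le]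
    exact Real.rpow_pos_of_pos (by nlinarith) _
  have hD0 : C * ENNReal.ofReal (ε/2) ≠ 0 := by
    apply mul_ne_zero hC0
    simp only [ne_eq, ENNReal.ofReal_eq_zero, not_le]
    linarith
  have hDtop : C * ENNReal.ofReal (ε/2) ≠ ⊤ :=
    ENNReal.mul_ne_top ENNReal.ofReal_ne_top ENNReal.ofReal_ne_top
  have hcard : (K'.card : ℝ) ≤ I.toReal / ((2*c*ε) ^ (-(1:ℝ)/2) * (ε/2)) := by
    have h1 : (K'.card : ENNReal) ≤ I / (C * ENNReal.ofReal (ε/2)) :=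
      (ENNReal.le_div_iff_mul_le (Or.inl hD0) (Or.inl hDtop)).mpr hsum
    have h2 : (I / (C * ENNReal.ofReal (ε/2))).toReal
        = I.toReal / ((2*c*ε) ^ (-(1:ℝ)/2) * (ε/2)) := by
      rw [ENNReal.toReal_div, ENNReal.toReal_mul, hC, ENNReal.toReal_ofReal, ENNReal.toReal_ofReal]
      · linarith
      · positivity
    have h3 : I / (C * ENNReal.ofReal (ε/2)) ≠ ⊤ :=
      (ENNReal.div_lt_top hint.ne hD0).ne
    have := ENNReal.toReal_le_toReal (ENNReal.natCast_ne_top _) h3 |>.mpr h1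
    rwa [ENNReal.toReal_natCast, h2] at this
  -- real arithmetic
  set a := Real.sqrt ε with ha
  set b := Real.sqrt (2*c) with hb
  have ha0 : 0 < a := Real.sqrt_pos.mpr hε
  have hb0 : 0 < b := Real.sqrt_pos.mpr (by linarith)
  have ha2 : a ^ 2 = ε := Real.sq_sqrt hε.le
  have hb2 : b ^ 2 = 2*c := Real.sq_sqrt (by linarith)
  have hI0 : 0 ≤ I.toReal := ENNReal.toReal_nonneg
  have hval : (2*c*ε) ^ (-(1:ℝ)/2) * (ε/2) = a / (2*b) := by
    have h1 : (2*c*ε) ^ (-(1:ℝ)/2) = (Real.sqrt (2*c*ε))⁻¹ := by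
      rw [show (-(1:ℝ)/2) = -(1/2) by norm_num, Real.rpow_neg (by nlinarith),
        ← Real.sqrt_eq_rpow]
    rw [h1, Real.sqrt_mul (by linarith) ε, ← ha, ← hb, ← ha2]
    field_simp
  have hcard' : (K'.card : ℝ) ≤ 2 * b * I.toReal / a := by
    rw [hval] at hcard
    calc (K'.card : ℝ) ≤ I.toReal / (a / (2*b)) := hcard
      _ = 2 * b * I.toReal / a := by field_simp
  have hKK' : K.card ≤ K'.card + 1 := by
    by_cases h0 : 0 ∈ K
    · rw [hK', Finset.card_erase_of_mem h0]; omega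
    · rw [hK', Finset.erase_eq_of_notMem h0]; omega
  have ha1 : a ≤ 1 := by
    rw [ha, show (1:ℝ) = Real.sqrt 1 by simp]
    exact Real.sqrt_le_sqrt hε1
  calc (coverN S ε : ℝ) ≤ (K.card : ℝ) := by exact_mod_cast hcov
    _ ≤ (K'.card : ℝ) + 1 := by exact_mod_cast hKK'
    _ ≤ 2 * b * I.toReal / a + 1 := by linarith
    _ ≤ (2 * b * I.toReal + 1) / a := by
        rw [add_div]
        have : (1:ℝ) ≤ 1 / a := by
          rw [le_div_iff₀ ha0]; linarith
        linarith

theorem singular_set_dim_le_half (c : ℝ) (hc : 0 < c) (g : ℝ → ENNReal)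
    (hint : (∫⁻ s in Set.Ioc (0:ℝ) 1, (g s) ^ 2) < ⊤)
    (hlow : ∀ s t : ℝ, 0 < s → s < t → t ≤ 1 → g t = ⊤ →
      (g s) ^ 2 ≥ (ENNReal.ofReal (c * (t - s))) ^ (-(1:ℝ)/2)) :
    ubDim {t ∈ Set.Ioc (0:ℝ) 1 | g t = ⊤} ≤ 1 / 2 := by
  set X := {t ∈ Set.Ioc (0:ℝ) 1 | g t = ⊤} with hX
  set I := (∫⁻ s in Set.Ioc (0:ℝ) 1, (g s) ^ 2).toReal with hI
  have hI0 : 0 ≤ I := ENNReal.toReal_nonneg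
  set L := 2 * Real.sqrt (2*c) * I + 1 with hL
  have hL1 : 1 ≤ L := by
    have : 0 ≤ 2 * Real.sqrt (2*c) * I := by positivity
    linarith
  set u : ℝ → ℝ := fun ε => Real.log (coverN X ε) / (-Real.log ε) with hu
  -- pointwise bound
  have hptwise : ∀ ε : ℝ, 0 < ε → ε < 1 → u ε ≤ 1/2 + Real.log L / (-Real.log ε) := by
    intro ε h1 h2
    have hlog : 0 < -Real.log ε := by
      have := Real.log_neg h1 h2; linarith
    have hNle : (coverN X ε : ℝ) ≤ L / Real.sqrt ε :=
      key_count c hc g hint hlow ε h1 h2.le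
    have hnum : Real.log (coverN X ε) ≤ Real.log L + (1/2) * (-Real.log ε) := by
      rcases Nat.eq_zero_or_pos (coverN X ε) with h | h
      · rw [h]
        simp only [Nat.cast_zero, Real.log_zero]
        have : 0 ≤ Real.log L := Real.log_nonneg hL1
        nlinarith
      · have hN0 : (0:ℝ) < (coverN X ε : ℝ) := by exact_mod_cast h
        calc Real.log (coverN X ε) ≤ Real.log (L / Real.sqrt ε) := Real.log_le_log hN0 hNle
          _ = Real.log L - Real.log (Real.sqrt ε) :=
            Real.log_div (by linarith) (ne_of_gt (Real.sqrt_pos.mpr h1))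
          _ = Real.log L - Real.log ε / 2 := by rw [Real.log_sqrt h1.le]
          _ = Real.log L + (1/2) * (-Real.log ε) := by ring
    calc u ε ≤ (Real.log L + (1/2) * (-Real.log ε)) / (-Real.log ε) := by
          rw [hu]
          exact div_le_div_of_nonneg_right hnum hlog.le |>.trans_eq rfl
      _ = 1/2 + Real.log L / (-Real.log ε) := by rw [add_div, mul_div_assoc, div_self hlog.ne']; ring
  have hev_pos : ∀ᶠ ε in nhdsWithin (0:ℝ) (Set.Ioi 0), 0 < ε :=
    self_mem_nhdsWithin
  have hev_lt : ∀ r : ℝ, 0 < r → ∀ᶠ ε in nhdsWithin (0:ℝ) (Set.Ioi 0), ε < r := by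
    intro r hr
    exact Filter.Eventually.filter_mono nhdsWithin_le_nhds
      ((Iio_mem_nhds hr : Set.Iio r ∈ nhds (0:ℝ)) : ∀ᶠ ε in nhds (0:ℝ), ε < r)
  have hcb : Filter.IsCoboundedUnder (· ≤ ·) (nhdsWithin (0:ℝ) (Set.Ioi 0)) u := by
    apply Filter.isCoboundedUnder_le_of_eventually_le (nhdsWithin (0:ℝ) (Set.Ioi 0)) (x := 0)
    filter_upwards [hev_pos, hev_lt 1 one_pos] with ε h1 h2
    have hlog : 0 < -Real.log ε := by
      have := Real.log_neg h1 h2; linarith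
    have hnum : 0 ≤ Real.log (coverN X ε) := by
      rcases Nat.eq_zero_or_pos (coverN X ε) with h | h
      · rw [h]; simp
      · exact Real.log_nonneg (by exact_mod_cast h)
    exact div_nonneg hnum hlog.le
  have hbound : ∀ δ : ℝ, 0 < δ → ubDim X ≤ 1/2 + δ := by
    intro δ hδ
    have hr0 : 0 < min 1 (Real.exp (-(Real.log L)/δ)) :=
      lt_min one_pos (Real.exp_pos _)
    have hev : ∀ᶠ ε in nhdsWithin (0:ℝ) (Set.Ioi 0), u ε ≤ 1/2 + δ := by
      filter_upwards [hev_pos, hev_lt _ hr0] with ε h1 h2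
      have h2' : ε < 1 := lt_of_lt_of_le h2 (min_le_left _ _)
      have h2'' : ε < Real.exp (-(Real.log L)/δ) := lt_of_lt_of_le h2 (min_le_right _ _)
      have hlog : 0 < -Real.log ε := by
        have := Real.log_neg h1 h2'; linarith
      have h3 : Real.log ε < -(Real.log L)/δ := (Real.log_lt_iff_lt_exp h1).mpr h2''
      have h4 : Real.log L / (-Real.log ε) ≤ δ := by
        rw [div_le_iff₀ hlog]
        have h3' : Real.log ε * δ < -Real.log L := (lt_div_iff₀ hδ).mp h3
        nlinarith
      calc u ε ≤ 1/2 + Real.log L / (-Real.log ε) := hptwise ε h1 h2'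
        _ ≤ 1/2 + δ := by linarith
    exact Filter.limsup_le_of_le hcb hev
  by_contra hlt
  push_neg at hlt
  have h := hbound ((ubDim X - 1/2)/2) (by linarith)
  linarith
end

section
/- There is no function g : (0,1] → [0,∞) satisfying both ∫₀¹ g(s)² ds < ∞, the backward lower bound g(s)² ≥ g(t)²/√(1 + c(t−s)g(t)⁴) for all 0 < s ≤ t ≤ 1 (c > 0 fixed), and g(1/n)² ≥ n for all positive integers n. -/
open MeasureTheory
open scoped NNReal ENNReal

set_option maxHeartbeats 1600000 in
theorem no_reciprocal_blowup (c : ℝ) (hc : 0 < c) :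
    ¬ ∃ g : ℝ → ℝ, (∀ s ∈ Set.Ioc (0:ℝ) 1, 0 ≤ g s) ∧
      (∫⁻ s in Set.Ioc (0:ℝ) 1, ENNReal.ofReal (g s ^ 2)) < ⊤ ∧
      (∀ s t : ℝ, 0 < s → s ≤ t → t ≤ 1 →
        g s ^ 2 ≥ g t ^ 2 / Real.sqrt (1 + c * (t - s) * g t ^ 4)) ∧
      (∀ n : ℕ, 1 ≤ n → g (1 / n) ^ 2 ≥ n) := by
  rintro ⟨g, hpos, hint, hback, hblow⟩
  set K := Real.sqrt (1 + c) with hKdef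
  have h1c : (0:ℝ) < 1 + c := by linarith
  have hK : 0 < K := Real.sqrt_pos.2 h1c
  -- the intervals
  set A : ℕ → Set ℝ := fun n => Set.Ioc (1 / ((n:ℝ) + 2)) (1 / ((n:ℝ) + 1)) with hAdef
  -- pointwise lower bound on each interval
  have hpt : ∀ n : ℕ, ∀ s ∈ A n, ((n:ℝ) + 1) / K ≤ g s ^ 2 := by
    intro n s hs
    have hn2 : (0:ℝ) < (n:ℝ) + 2 := by positivity
    have hn1 : (0:ℝ) < (n:ℝ) + 1 := by positivity
    obtain ⟨hs1, hs2⟩ := hs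
    have hs0 : 0 < s := lt_trans (by positivity) hs1
    set t : ℝ := 1 / ((n:ℝ) + 1) with htdef
    have ht1 : t ≤ 1 := by
      rw [htdef, div_le_one hn1]; linarith
    have hx : ((n:ℝ) + 1) ≤ g t ^ 2 := by
      have := hblow (n + 1) (by omega)
      push_cast at this
      exact this
    set x : ℝ := g t ^ 2 with hxdef
    have hx0 : 0 < x := lt_of_lt_of_le hn1 hx
    have hts : t - s ≤ 1 / (((n:ℝ) + 1) * ((n:ℝ) + 2)) := by
      have : 1 / ((n:ℝ) + 2) ≤ s := le_of_lt hs1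
      have key : t - 1 / ((n:ℝ) + 2) = 1 / (((n:ℝ) + 1) * ((n:ℝ) + 2)) := by
        rw [htdef]; field_simp; ring
      linarith
    have hts0 : 0 ≤ t - s := by linarith [hs2]
    have hback' := hback s t hs0 hs2 ht1
    have hgt4 : g t ^ 4 = x ^ 2 := by rw [hxdef]; ring
    rw [hgt4] at hback'
    set D : ℝ := 1 + c * (t - s) * x ^ 2 with hDdef
    have hD1 : (1:ℝ) ≤ D := by
      have : 0 ≤ c * (t - s) * x ^ 2 := by positivity
      linarith
    have hD0 : 0 < D := by linarith
    -- key algebraic inequality : ((n+1))^2 * D ≤ x^2 * (1+c)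
    have hkey : ((n:ℝ) + 1) ^ 2 * D ≤ x ^ 2 * (1 + c) := by
      have hP : (0:ℝ) < ((n:ℝ) + 1) * ((n:ℝ) + 2) := by positivity
      have h2 : (t - s) * (((n:ℝ) + 1) * ((n:ℝ) + 2)) ≤ 1 := by
        have := mul_le_mul_of_nonneg_right hts hP.le
        rwa [one_div, inv_mul_cancel₀ hP.ne'] at this
      have h3 : (t - s) * ((n:ℝ) + 1) ^ 2 ≤ 1 := by nlinarith
      have h4 : c * ((t - s) * ((n:ℝ) + 1) ^ 2) * x ^ 2 ≤ c * 1 * x ^ 2 :=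
        mul_le_mul_of_nonneg_right (mul_le_mul_of_nonneg_left h3 hc.le) (sq_nonneg x)
      have h5 : ((n:ℝ) + 1) ^ 2 ≤ x ^ 2 := by nlinarith
      rw [hDdef]
      nlinarith [h4, h5]
    have hfrac : ((n:ℝ) + 1) ^ 2 / (1 + c) ≤ x ^ 2 / D := by
      rw [div_le_div_iff₀ h1c hD0]
      nlinarith
    have hs1' : ((n:ℝ) + 1) / K = Real.sqrt (((n:ℝ) + 1) ^ 2 / (1 + c)) := by
      rw [Real.sqrt_div (by positivity), Real.sqrt_sq hn1.le, hKdef]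
    have hs2' : x / Real.sqrt D = Real.sqrt (x ^ 2 / D) := by
      rw [Real.sqrt_div (by positivity), Real.sqrt_sq hx0.le]
    calc ((n:ℝ) + 1) / K = Real.sqrt (((n:ℝ) + 1) ^ 2 / (1 + c)) := hs1'
      _ ≤ Real.sqrt (x ^ 2 / D) := Real.sqrt_le_sqrt hfrac
      _ = x / Real.sqrt D := hs2'.symm
      _ ≤ g s ^ 2 := hback'
  -- measurability and disjointness of the intervals
  have hAm : ∀ n, MeasurableSet (A n) := fun n => measurableSet_Ioc
  have hAd : Pairwise (Function.onFun Disjoint A) := by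
    have hmono : ∀ m k : ℕ, m < k → Disjoint (A m) (A k) := by
      intro m k hmk
      rw [hAdef]
      rw [Set.Ioc_disjoint_Ioc]
      have h1 : (1:ℝ) / ((k:ℝ) + 1) ≤ 1 / ((m:ℝ) + 2) := by
        apply one_div_le_one_div_of_le (by positivity)
        have : (m:ℕ) + 1 ≤ k := hmk
        have : ((m:ℝ)) + 1 ≤ (k:ℝ) := by exact_mod_cast this
        linarith
      calc min (1 / ((m:ℝ) + 1)) (1 / ((k:ℝ) + 1)) ≤ 1 / ((k:ℝ) + 1) := min_le_right _ _
        _ ≤ 1 / ((m:ℝ) + 2) := h1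
        _ ≤ max (1 / ((m:ℝ) + 2)) (1 / ((k:ℝ) + 2)) := le_max_left _ _
    intro i j hij
    rcases lt_or_gt_of_ne hij with h | h
    · exact hmono i j h
    · exact (hmono j i h).symm
  -- union is inside Ioc 0 1
  have hsub : (⋃ n, A n) ⊆ Set.Ioc (0:ℝ) 1 := by
    rintro x hx
    simp only [Set.mem_iUnion] at hx
    obtain ⟨n, hn1, hn2⟩ := hx
    constructor
    · exact lt_trans (by positivity) hn1
    · calc x ≤ 1 / ((n:ℝ) + 1) := hn2
        _ ≤ 1 := by rw [div_le_one (by positivity)]; linarith [Nat.cast_nonneg (α := ℝ) n]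
  -- lower bound on each piece integral
  have hpiece : ∀ n : ℕ, ENNReal.ofReal (1 / (K * ((n:ℝ) + 2)))
      ≤ ∫⁻ s in A n, ENNReal.ofReal (g s ^ 2) := by
    intro n
    have hvol : volume (A n) = ENNReal.ofReal (1 / (((n:ℝ) + 1) * ((n:ℝ) + 2))) := by
      rw [hAdef, Real.volume_Ioc]
      congr 1
      field_simp
      ring
    have hconst : ENNReal.ofReal (((n:ℝ) + 1) / K) * volume (A n)
        ≤ ∫⁻ s in A n, ENNReal.ofReal (g s ^ 2) := by
      rw [← setLIntegral_const (A n) (ENNReal.ofReal (((n:ℝ) + 1) / K))]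
      apply lintegral_mono_ae
      rw [ae_restrict_iff' (hAm n)]
      filter_upwards with s hs
      exact ENNReal.ofReal_le_ofReal (hpt n s hs)
    refine le_trans (le_of_eq ?_) hconst
    rw [hvol, ← ENNReal.ofReal_mul (by positivity)]
    congr 1
    have hn1 : (0:ℝ) < (n:ℝ) + 1 := by positivity
    field_simp
  -- sum of the lower bounds is infinite
  have hns : ¬ Summable (fun n : ℕ => 1 / (K * ((n:ℝ) + 2))) := by
    intro h
    have h2 : Summable (fun n : ℕ => 1 / ((n:ℝ) + 2)) := by
      have := h.mul_left K
      refine this.congr fun n => ?_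
      field_simp
    have h3 : Summable (fun n : ℕ => 1 / (((n + 2 : ℕ)) : ℝ)) := by
      refine h2.congr fun n => ?_
      push_cast
      ring
    exact Real.not_summable_one_div_natCast
      ((summable_nat_add_iff (f := fun n : ℕ => 1 / ((n : ℝ))) 2).mp h3)
  have htop : (∑' n : ℕ, ENNReal.ofReal (1 / (K * ((n:ℝ) + 2)))) = ⊤ := by
    have heq : ∀ n : ℕ, ENNReal.ofReal (1 / (K * ((n:ℝ) + 2)))
        = ((Real.toNNReal (1 / (K * ((n:ℝ) + 2))) : ℝ≥0) : ℝ≥0∞) := fun n => rfl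
    simp_rw [heq]
    rw [ENNReal.tsum_coe_eq_top_iff_not_summable_coe]
    intro h
    apply hns
    refine h.congr fun n => ?_
    rw [Real.coe_toNNReal _ (by positivity)]
  -- put it together
  have hchain : (⊤ : ℝ≥0∞) ≤ ∫⁻ s in Set.Ioc (0:ℝ) 1, ENNReal.ofReal (g s ^ 2) := by
    calc (⊤ : ℝ≥0∞) = ∑' n : ℕ, ENNReal.ofReal (1 / (K * ((n:ℝ) + 2))) := htop.symm
      _ ≤ ∑' n : ℕ, ∫⁻ s in A n, ENNReal.ofReal (g s ^ 2) := ENNReal.tsum_le_tsum hpiece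
      _ = ∫⁻ s in ⋃ n, A n, ENNReal.ofReal (g s ^ 2) :=
          (lintegral_iUnion hAm hAd _).symm
      _ ≤ ∫⁻ s in Set.Ioc (0:ℝ) 1, ENNReal.ofReal (g s ^ 2) :=
          lintegral_mono_set hsub
  exact absurd hint (by simp [top_le_iff.mp hchain])
end

section
/- If g : (0,1] → [0,∞) satisfies g(s)² ≥ g(tₙ)²/√(1 + (tₙ − s)g(tₙ)⁴) for s ∈ (t_{n+1}, tₙ] with tₙ = 1/n and g(tₙ)² ≥ n for all n, then ∫_{t_{n+1}}^{tₙ} g(s)² ds ≥ 1/(√2 (n+1)) for every n ≥ 1. -/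
open MeasureTheory

theorem interval_estimate_reciprocal (c : ℝ) (hc : 0 < c) (g : ℝ → ℝ)
    (hg : ∀ s, 0 ≤ g s)
    (hlow : ∀ n : ℕ, 1 ≤ n → ∀ s ∈ Set.Ioc (1 / ((n:ℝ) + 1)) (1 / (n:ℝ)),
      g s ^ 2 ≥ g (1 / n) ^ 2 / Real.sqrt (1 + (1 / (n:ℝ) - s) * g (1 / n) ^ 4))
    (hbig : ∀ n : ℕ, 1 ≤ n → g (1 / n) ^ 2 ≥ n) :
    ∀ n : ℕ, 1 ≤ n →
      (∫⁻ s in Set.Ioc (1 / ((n:ℝ) + 1)) (1 / (n:ℝ)), ENNReal.ofReal (g s ^ 2))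
        ≥ ENNReal.ofReal (1 / (Real.sqrt 2 * ((n:ℝ) + 1))) := by
  intro n hn
  have hn0 : (0:ℝ) < n := by exact_mod_cast hn
  have hn1 : (0:ℝ) < (n:ℝ) + 1 := by linarith
  have hs2 : (0:ℝ) < Real.sqrt 2 := Real.sqrt_pos.mpr (by norm_num)
  have hs2sq : Real.sqrt 2 ^ 2 = 2 := Real.sq_sqrt (by norm_num)
  set G : ℝ := g (1 / (n:ℝ)) ^ 2 with hG
  have hGn : (n:ℝ) ≤ G := hbig n hn
  have hGpos : 0 < G := lt_of_lt_of_le hn0 hGn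
  have key : ∀ s ∈ Set.Ioc (1 / ((n:ℝ) + 1)) (1 / (n:ℝ)),
      (n:ℝ) / Real.sqrt 2 ≤ g s ^ 2 := by
    intro s hs
    have h1 := hlow n hn s hs
    have hts : 0 ≤ 1 / (n:ℝ) - s := by linarith [hs.2]
    have hts2 : 1 / (n:ℝ) - s ≤ 1 / ((n:ℝ) * ((n:ℝ) + 1)) := by
      have hd : 1 / (n:ℝ) - 1 / ((n:ℝ) + 1) = 1 / ((n:ℝ) * ((n:ℝ) + 1)) := by
        field_simp
        ring
      linarith [hs.1]
    have h4 : g (1 / (n:ℝ)) ^ 4 = G ^ 2 := by rw [hG]; ring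
    have hbound : 1 + (1 / (n:ℝ) - s) * g (1 / (n:ℝ)) ^ 4 ≤ 2 * (G ^ 2 / (n:ℝ) ^ 2) := by
      rw [h4]
      have h1G : 1 ≤ G ^ 2 / (n:ℝ) ^ 2 := by
        rw [le_div_iff₀ (by positivity)]
        nlinarith
      have h2 : (1 / (n:ℝ) - s) * G ^ 2 ≤ G ^ 2 / (n:ℝ) ^ 2 := by
        have ha : (1 / (n:ℝ) - s) * G ^ 2 ≤ (1 / ((n:ℝ) * ((n:ℝ) + 1))) * G ^ 2 :=
          mul_le_mul_of_nonneg_right hts2 (by positivity)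
        have hb : (1 / ((n:ℝ) * ((n:ℝ) + 1))) * G ^ 2 ≤ G ^ 2 / (n:ℝ) ^ 2 := by
          rw [one_div_mul_eq_div]
          gcongr
          nlinarith
        linarith
      linarith
    have hsqrtle : Real.sqrt (1 + (1 / (n:ℝ) - s) * g (1 / (n:ℝ)) ^ 4)
        ≤ Real.sqrt 2 * G / (n:ℝ) := by
      have := Real.sqrt_le_sqrt hbound
      have heq : Real.sqrt (2 * (G ^ 2 / (n:ℝ) ^ 2)) = Real.sqrt 2 * G / (n:ℝ) := by
        rw [show 2 * (G ^ 2 / (n:ℝ) ^ 2) = (Real.sqrt 2 * G / (n:ℝ)) ^ 2 by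
          field_simp
          nlinarith]
        exact Real.sqrt_sq (by positivity)
      linarith [heq ▸ this]
    have hsqrtpos : 0 < Real.sqrt (1 + (1 / (n:ℝ) - s) * g (1 / (n:ℝ)) ^ 4) := by
      apply Real.sqrt_pos.mpr
      nlinarith [mul_nonneg hts (pow_nonneg (hg (1 / (n:ℝ))) 4)]
    have hdiv : (n:ℝ) / Real.sqrt 2
        ≤ G / Real.sqrt (1 + (1 / (n:ℝ) - s) * g (1 / (n:ℝ)) ^ 4) := by
      rw [div_le_div_iff₀ hs2 hsqrtpos]
      have hmul := mul_le_mul_of_nonneg_left hsqrtle (le_of_lt hn0)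
      have hcalc : (n:ℝ) * (Real.sqrt 2 * G / (n:ℝ)) = Real.sqrt 2 * G := by
        field_simp
      linarith [hmul, hcalc]
    linarith
  have hmeas : MeasurableSet (Set.Ioc (1 / ((n:ℝ) + 1)) (1 / (n:ℝ))) :=
    measurableSet_Ioc
  calc (∫⁻ s in Set.Ioc (1 / ((n:ℝ) + 1)) (1 / (n:ℝ)), ENNReal.ofReal (g s ^ 2))
      ≥ ∫⁻ _ in Set.Ioc (1 / ((n:ℝ) + 1)) (1 / (n:ℝ)),
          ENNReal.ofReal ((n:ℝ) / Real.sqrt 2) := by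
        apply setLIntegral_mono' hmeas
        intro s hs
        exact ENNReal.ofReal_le_ofReal (key s hs)
    _ = ENNReal.ofReal ((n:ℝ) / Real.sqrt 2) *
          volume (Set.Ioc (1 / ((n:ℝ) + 1)) (1 / (n:ℝ))) := setLIntegral_const _ _
    _ = ENNReal.ofReal (1 / (Real.sqrt 2 * ((n:ℝ) + 1))) := by
        rw [Real.volume_Ioc, ← ENNReal.ofReal_mul (by positivity)]
        congr 1
        field_simp
        ring
end

section
/- If (tₙ) is a sequence of times with tₙ strictly decreasing to 0 and g(s)² ≥ 1/√(c(tₙ − s)) for all s < tₙ (c > 0), and ∫₀¹ g(s)² ds < ∞, then ∑_{n=1}^{∞} √(tₙ − t_{n+1}) < ∞. -/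
/-!
On the gap `(tₙ₊₁, tₙ)`, of length `dₙ`, the hypothesis gives `g² ≥ (c dₙ)^(-1/2)`, so the
integral of `g²` over the gap is at least `√dₙ / √c`. The gaps are disjoint subintervals of
`(0, 1]`, hence `∑ √dₙ ≤ √c ∫₀¹ g² < ∞`.
-/

open MeasureTheory Set

lemma Real.mul_rpow_neg_half_mul_right {c d : ℝ} (hc : 0 < c) (hd : 0 < d) :
    (c * d) ^ (-(1:ℝ)/2) * d = √d / √c := by
  rw [show -(1:ℝ)/2 = -(1/2) by norm_num, Real.rpow_neg (by positivity), ← Real.sqrt_eq_rpow,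
    Real.sqrt_mul hc.le]
  have hsd : √d * √d = d := Real.mul_self_sqrt hd.le
  field_simp [(Real.sqrt_pos.2 hc).ne', (Real.sqrt_pos.2 hd).ne']
  linarith

lemma ofReal_sqrt_div_le_setLIntegral_Ioo {c a b : ℝ} {f : ℝ → ENNReal} (hc : 0 < c) (hab : a < b)
    (hf : ∀ s ∈ Ioo a b, ENNReal.ofReal (c * (b - s)) ^ (-(1:ℝ)/2) ≤ f s) :
    ENNReal.ofReal (√(b - a) / √c) ≤ ∫⁻ s in Ioo a b, f s := by
  have hconst : ∀ s ∈ Ioo a b, ENNReal.ofReal ((c * (b - a)) ^ (-(1:ℝ)/2)) ≤ f s := by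
    intro s hs
    have hpos : 0 < c * (b - s) := mul_pos hc (sub_pos.2 hs.2)
    refine le_trans ?_ (hf s hs)
    rw [ENNReal.ofReal_rpow_of_pos hpos]
    gcongr ENNReal.ofReal ?_
    exact Real.rpow_le_rpow_of_nonpos hpos (by gcongr; exact hs.1.le) (by norm_num)
  calc ENNReal.ofReal (√(b - a) / √c)
      = ENNReal.ofReal ((c * (b - a)) ^ (-(1:ℝ)/2)) * volume (Ioo a b) := by
        rw [Real.volume_Ioo, ← ENNReal.ofReal_mul (by positivity),
          Real.mul_rpow_neg_half_mul_right hc (sub_pos.2 hab)]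
    _ = ∫⁻ _ in Ioo a b, ENNReal.ofReal ((c * (b - a)) ^ (-(1:ℝ)/2)) :=
        (setLIntegral_const _ _).symm
    _ ≤ ∫⁻ s in Ioo a b, f s := setLIntegral_mono' measurableSet_Ioo hconst

lemma tsum_setLIntegral_Ioo_succ_le {α : Type*} [LinearOrder α] [TopologicalSpace α]
    [OrderClosedTopology α] [MeasurableSpace α] [OpensMeasurableSpace α] {μ : Measure α}
    {f : α → ENNReal} {t : ℕ → α} (ht : Antitone t) {s : Set α}
    (hs : ∀ n, Ioo (t (n + 1)) (t n) ⊆ s) :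
    ∑' n, ∫⁻ x in Ioo (t (n + 1)) (t n), f x ∂μ ≤ ∫⁻ x in s, f x ∂μ := by
  have hdisj : Pairwise (Function.onFun Disjoint fun n => Ioo (t (n + 1)) (t n)) :=
    ht.pairwise_disjoint_on_Ioo_succ
  rw [← lintegral_iUnion (fun _ => measurableSet_Ioo) hdisj]
  exact lintegral_mono_set (iUnion_subset hs)

lemma summable_of_tsum_ofReal_ne_top {ι : Type*} {f : ι → ℝ} (hf : ∀ i, 0 ≤ f i)
    (h : ∑' i, ENNReal.ofReal (f i) ≠ ⊤) : Summable f :=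
  (ENNReal.summable_toReal h).congr fun i => ENNReal.toReal_ofReal (hf i)

theorem leray_gap_sum_general (c : ℝ) (hc : 0 < c) (g : ℝ → ENNReal) (t : ℕ → ℝ)
    (ht1 : ∀ n, 0 < t n ∧ t n ≤ 1) (hanti : StrictAnti t)
    (hlow : ∀ n : ℕ, ∀ s : ℝ, 0 < s → s < t n →
      (g s) ^ 2 ≥ (ENNReal.ofReal (c * (t n - s))) ^ (-(1:ℝ)/2))
    (hint : (∫⁻ s in Set.Ioc (0:ℝ) 1, (g s) ^ 2) < ⊤) :
    Summable (fun n => Real.sqrt (t n - t (n + 1))) := by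
  have hgap : ∀ n, ENNReal.ofReal (√(t n - t (n + 1)) / √c)
      ≤ ∫⁻ s in Ioo (t (n + 1)) (t n), g s ^ 2 := fun n =>
    ofReal_sqrt_div_le_setLIntegral_Ioo hc (hanti n.lt_succ_self) fun s hs =>
      hlow n s ((ht1 (n + 1)).1.trans hs.1) hs.2
  have hsub : ∀ n, Ioo (t (n + 1)) (t n) ⊆ Ioc 0 1 := fun n _ hs =>
    ⟨(ht1 (n + 1)).1.trans hs.1, hs.2.le.trans (ht1 n).2⟩
  have hfin : ∑' n, ENNReal.ofReal (√(t n - t (n + 1)) / √c) ≠ ⊤ :=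
    ne_top_of_le_ne_top hint.ne <|
      (ENNReal.tsum_le_tsum hgap).trans (tsum_setLIntegral_Ioo_succ_le hanti.antitone hsub)
  exact (summable_div_const_iff (Real.sqrt_pos.2 hc).ne').1 <|
    summable_of_tsum_ofReal_ne_top (fun n => by positivity) hfin

theorem leray_gap_sum (c : ℝ) (hc : 0 < c) (g : ℝ → ENNReal) (t : ℕ → ℝ)
    (ht1 : ∀ n, 0 < t n ∧ t n ≤ 1) (hanti : StrictAnti t)
    (hlim : Filter.Tendsto t Filter.atTop (nhds 0))
    (hlow : ∀ n : ℕ, ∀ s : ℝ, 0 < s → s < t n →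
      (g s) ^ 2 ≥ (ENNReal.ofReal (c * (t n - s))) ^ (-(1:ℝ)/2))
    (hint : (∫⁻ s in Set.Ioc (0:ℝ) 1, (g s) ^ 2) < ⊤) :
    Summable (fun n => Real.sqrt (t n - t (n + 1))) :=
  leray_gap_sum_general c hc g t ht1 hanti hlow hint
end
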